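/- Let $E, F$ be Riesz spaces and $T : E \to F$ a disjointness preserving orthogonally additive operator. Then the maps $\phi(x) = (T(x))^+$ and $\psi(x) = (T(x))^-$ are disjointness preserving orthogonally additive operators, and $\phi = T \vee 0$ and $\psi = (-T) \vee 0$ in the ordered vector space of orthogonally additive operators; in particular $T$ is regular, with $T = T^+ - T^-$ and $T^\pm \ge 0$. -/

import Mathlib

/-- Disjointness in a Riesz space: `|x| ⊓ |y| = 0`. -/
def RDisjoint {E : Type*} [Lattice E] [AddCommGroup E] (x y : E) : Prop :=
  |x| ⊓ |y| = 0

/-- `x` is a fragment of `e` (lateral order `x ⊑ e`): `x ⊥ (e - x)`. -/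
def IsFragment {E : Type*} [Lattice E] [AddCommGroup E] (x e : E) : Prop :=
  RDisjoint x (e - x)

/-- An orthogonally additive operator. -/
def IsOAO {E F : Type*} [Lattice E] [AddCommGroup E] [Lattice F] [AddCommGroup F]
    (T : E → F) : Prop :=
  ∀ x y : E, RDisjoint x y → T (x + y) = T x + T y

variable {E F : Type*}
  [Lattice E] [AddCommGroup E] [CovariantClass E E (· + ·) (· ≤ ·)]
  [Lattice F] [AddCommGroup F] [CovariantClass F F (· + ·) (· ≤ ·)]

/-! For disjoint `a, b` write `a + b = (a⁺ + b⁺) - (a⁻ + b⁻)`. The two brackets are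
disjoint, because disjointness is additive in each argument and `a⁺, a⁻, b⁺, b⁻` are
pairwise disjoint; hence they are the positive and negative parts of `a + b`. Applied to
`a = T x`, `b = T y` for disjoint `x, y`, this makes `x ↦ (T x)⁺` and `x ↦ (T x)⁻`
orthogonally additive. The order-theoretic claims hold pointwise. -/

lemma RDisjoint.symm {α : Type*} [Lattice α] [AddCommGroup α] {a b : α}
    (h : RDisjoint a b) : RDisjoint b a := by
  rw [RDisjoint, inf_comm]
  exact h

section LatticeOrderedGroup

variable {α : Type*} [Lattice α] [AddCommGroup α] [AddLeftMono α] {a b c d u v w : α}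

lemma abs_posPart_le_abs (a : α) : |a⁺| ≤ |a| := by
  rw [abs_of_nonneg (posPart_nonneg a)]
  exact sup_le (le_abs_self a) (abs_nonneg a)

lemma abs_negPart_le_abs (a : α) : |a⁻| ≤ |a| := by
  rw [abs_of_nonneg (negPart_nonneg a)]
  exact sup_le (neg_le_abs a) (abs_nonneg a)

lemma add_eq_sup_of_inf_eq_zero (h : u ⊓ v = 0) : u + v = u ⊔ v := by
  rw [← inf_add_sup u v, h, zero_add]

lemma posPart_sub_of_inf_eq_zero (h : u ⊓ v = 0) : (u - v)⁺ = u := by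
  rw [posPart_def, ← sub_self v, ← sup_sub, ← add_eq_sup_of_inf_eq_zero h,
    add_sub_cancel_right]

lemma negPart_sub_of_inf_eq_zero (h : u ⊓ v = 0) : (u - v)⁻ = v := by
  rw [← posPart_neg, neg_sub, posPart_sub_of_inf_eq_zero (inf_comm u v ▸ h)]

lemma add_inf_eq_zero (hu : 0 ≤ u) (hv : 0 ≤ v) (hw : 0 ≤ w) (huw : u ⊓ w = 0)
    (hvw : v ⊓ w = 0) : (u + v) ⊓ w = 0 := by
  refine le_antisymm ?_ (le_inf (add_nonneg hu hv) hw)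
  have hle_u : (u + v) ⊓ w ≤ u := calc
    (u + v) ⊓ w ≤ (u + v) ⊓ (u + w) := inf_le_inf_left _ (le_add_of_nonneg_left hu)
    _ = u := by rw [← add_inf, hvw, add_zero]
  exact huw ▸ le_inf hle_u inf_le_right

lemma add_eq_posPart_add_sub_negPart_add (a b : α) : a + b = (a⁺ + b⁺) - (a⁻ + b⁻) := by
  conv_lhs => rw [← posPart_sub_negPart a, ← posPart_sub_negPart b]
  abel

lemma rdisjoint_iff_inf_eq_zero (hu : 0 ≤ u) (hv : 0 ≤ v) : RDisjoint u v ↔ u ⊓ v = 0 := by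
  rw [RDisjoint, abs_of_nonneg hu, abs_of_nonneg hv]

lemma rdisjoint_posPart_negPart (a : α) : RDisjoint a⁺ a⁻ :=
  (rdisjoint_iff_inf_eq_zero (posPart_nonneg a) (negPart_nonneg a)).2
    (posPart_inf_negPart_eq_zero a)

namespace RDisjoint

lemma mono (h : RDisjoint a b) (hc : |c| ≤ |a|) (hd : |d| ≤ |b|) : RDisjoint c d :=
  le_antisymm (h ▸ inf_le_inf hc hd) (le_inf (abs_nonneg c) (abs_nonneg d))

lemma add_left (hac : RDisjoint a c) (hbc : RDisjoint b c) : RDisjoint (a + b) c :=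
  le_antisymm
    (calc |a + b| ⊓ |c| ≤ (|a| + |b|) ⊓ |c| := inf_le_inf_right _ (abs_add_le a b)
      _ = 0 := add_inf_eq_zero (abs_nonneg a) (abs_nonneg b) (abs_nonneg c) hac hbc)
    (le_inf (abs_nonneg _) (abs_nonneg c))

lemma add_right (hab : RDisjoint a b) (hac : RDisjoint a c) : RDisjoint a (b + c) :=
  (hab.symm.add_left hac.symm).symm

lemma inf_posPart_add_negPart_add (h : RDisjoint a b) : (a⁺ + b⁺) ⊓ (a⁻ + b⁻) = 0 := by
  have hpa := (rdisjoint_posPart_negPart a).add_right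
    (h.mono (abs_posPart_le_abs a) (abs_negPart_le_abs b))
  have hpb := (h.symm.mono (abs_posPart_le_abs b) (abs_negPart_le_abs a)).add_right
    (rdisjoint_posPart_negPart b)
  exact (rdisjoint_iff_inf_eq_zero (by positivity) (by positivity)).1 (hpa.add_left hpb)

lemma posPart_add (h : RDisjoint a b) : (a + b)⁺ = a⁺ + b⁺ := by
  rw [add_eq_posPart_add_sub_negPart_add a b,
    posPart_sub_of_inf_eq_zero h.inf_posPart_add_negPart_add]

lemma negPart_add (h : RDisjoint a b) : (a + b)⁻ = a⁻ + b⁻ := by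
  rw [add_eq_posPart_add_sub_negPart_add a b,
    negPart_sub_of_inf_eq_zero h.inf_posPart_add_negPart_add]

end RDisjoint

end LatticeOrderedGroup

section Operators

variable {X Y : Type*} [Lattice X] [AddCommGroup X] [Lattice Y] [AddCommGroup Y] [AddLeftMono Y]
  {T : X → Y}

lemma IsOAO.posPart_comp (hT : IsOAO T)
    (hd : ∀ x y, RDisjoint x y → RDisjoint (T x) (T y)) : IsOAO fun x => (T x)⁺ :=
  fun x y hxy => by simp only [hT x y hxy, (hd x y hxy).posPart_add]

lemma IsOAO.negPart_comp (hT : IsOAO T)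
    (hd : ∀ x y, RDisjoint x y → RDisjoint (T x) (T y)) : IsOAO fun x => (T x)⁻ :=
  fun x y hxy => by simp only [hT x y hxy, (hd x y hxy).negPart_add]

end Operators

/-- For a disjointness preserving OAO `T`, the maps `x ↦ (T x)⁺` and `x ↦ (T x)⁻` are
disjointness preserving OAOs equal to `T ∨ 0` and `(-T) ∨ 0` respectively; in
particular `T` is regular. -/
theorem disjointness_preserving_oao_posPart_negPart (T : E → F)
    (hT : IsOAO T)
    (hd : ∀ x y : E, RDisjoint x y → RDisjoint (T x) (T y)) :
    (IsOAO (fun x => (T x)⁺) ∧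
      ∀ x y : E, RDisjoint x y → RDisjoint ((T x)⁺) ((T y)⁺)) ∧
    (IsOAO (fun x => (T x)⁻) ∧
      ∀ x y : E, RDisjoint x y → RDisjoint ((T x)⁻) ((T y)⁻)) ∧
    ((∀ x : E, T x ≤ (T x)⁺) ∧ (∀ x : E, 0 ≤ (T x)⁺) ∧
      ∀ P : E → F, IsOAO P → (∀ x, T x ≤ P x) → (∀ x, 0 ≤ P x) →
        ∀ x : E, (T x)⁺ ≤ P x) ∧
    ((∀ x : E, -T x ≤ (T x)⁻) ∧ (∀ x : E, 0 ≤ (T x)⁻) ∧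
      ∀ P : E → F, IsOAO P → (∀ x, -T x ≤ P x) → (∀ x, 0 ≤ P x) →
        ∀ x : E, (T x)⁻ ≤ P x) ∧
    (∀ x : E, T x = (T x)⁺ - (T x)⁻) := by
  refine ⟨⟨hT.posPart_comp hd, fun x y hxy => ?_⟩,
    ⟨hT.negPart_comp hd, fun x y hxy => ?_⟩,
    ⟨fun x => le_posPart _, fun x => posPart_nonneg _,
      fun P _ hTP hP0 x => sup_le (hTP x) (hP0 x)⟩,
    ⟨fun x => neg_le_negPart _, fun x => negPart_nonneg _,
      fun P _ hTP hP0 x => sup_le (hTP x) (hP0 x)⟩,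
    fun x => (posPart_sub_negPart (T x)).symm⟩
  · exact (hd x y hxy).mono (abs_posPart_le_abs _) (abs_posPart_le_abs _)
  · exact (hd x y hxy).mono (abs_negPart_le_abs _) (abs_negPart_le_abs _)
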